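/- arXiv:2601.13100 — 6 statements merged into one kernel-verified Lean document; each statement's English description precedes it below -/
import Mathlib

section
/- Let p be a strictly positive probability distribution on a finite vocabulary V, let α ∈ (0,1], let w : Fin (k+1) → ℝ be nonnegative weights with ∑ j, w j = 1 - α, and let s₀, …, s_k be strictly positive distributions on V. Define the meta-teacher q = α·p + ∑ j, w j · s_j (componentwise). Then KL(p‖q) ≤ ∑ j, w j · KL(p‖s_j) ≤ (1-α) · max_j KL(p‖s_j). Hence anchored aggregation over multiple previous student generations still contracts the KL distance to the base teacher by the factor 1-α. -/
lemma log_concave_mix {n : ℕ} (W : Fin n → ℝ) (z : Fin n → ℝ)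
    (hW : ∀ j, 0 ≤ W j) (hWs : ∑ j, W j = 1) (hz : ∀ j, 0 < z j) :
    ∑ j, W j * Real.log (z j) ≤ Real.log (∑ j, W j * z j) := by
  have h := strictConcaveOn_log_Ioi.concaveOn.le_map_sum
    (t := Finset.univ) (w := W) (p := z)
    (fun i _ => hW i) hWs (fun i _ => hz i)
  simpa [smul_eq_mul] using h

/-- **Anchored aggregation over multiple student generations contracts KL.**
With base teacher `p`, anchor weight `α ∈ (0,1]`, nonnegative weights `w`
summing to `1 - α`, and strictly positive distributions `s j`, the meta-teacher
`q = α·p + ∑ j, w j · s j` satisfies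
`KL(p‖q) ≤ ∑ j, w j · KL(p‖s j) ≤ (1-α) · max_j KL(p‖s j)`. -/
theorem anchored_multi_student_kl_contraction
    {V : Type*} [Fintype V] [Nonempty V] {k : ℕ}
    (p : V → ℝ) (s : Fin (k + 1) → V → ℝ)
    (hp_pos : ∀ i, 0 < p i) (hp_sum : ∑ i, p i = 1)
    (hs_pos : ∀ j i, 0 < s j i) (hs_sum : ∀ j, ∑ i, s j i = 1)
    (α : ℝ) (hα0 : 0 < α) (hα1 : α ≤ 1)
    (w : Fin (k + 1) → ℝ) (hw_nonneg : ∀ j, 0 ≤ w j)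
    (hw_sum : ∑ j, w j = 1 - α) :
    (∑ i, p i * Real.log (p i / (α * p i + ∑ j, w j * s j i)) ≤
        ∑ j, w j * ∑ i, p i * Real.log (p i / s j i)) ∧
      (∑ j, w j * ∑ i, p i * Real.log (p i / s j i) ≤
        (1 - α) * ⨆ j, ∑ i, p i * Real.log (p i / s j i)) := by
  constructor
  · -- pointwise bound
    have key : ∀ i, p i * Real.log (p i / (α * p i + ∑ j, w j * s j i)) ≤
        ∑ j, w j * (p i * Real.log (p i / s j i)) := by
      intro i
      have hlog : α * Real.log (p i) + ∑ j, w j * Real.log (s j i) ≤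
          Real.log (α * p i + ∑ j, w j * s j i) := by
        have h := log_concave_mix (Fin.cons α w) (Fin.cons (p i) (fun j => s j i))
          (by intro j; refine Fin.cases ?_ ?_ j <;> simp [hα0.le, hw_nonneg])
          (by simp [Fin.sum_cons, hw_sum])
          (by intro j; refine Fin.cases ?_ ?_ j <;> simp [hp_pos, hs_pos])
        simpa [Fin.sum_univ_succ] using h
      have hq_pos : 0 < α * p i + ∑ j, w j * s j i := by
        have : 0 ≤ ∑ j, w j * s j i :=
          Finset.sum_nonneg fun j _ => mul_nonneg (hw_nonneg j) (hs_pos j i).le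
        nlinarith [hp_pos i]
      have h2 : Real.log (p i / (α * p i + ∑ j, w j * s j i)) ≤
          ∑ j, w j * Real.log (p i / s j i) := by
        rw [Real.log_div (hp_pos i).ne' hq_pos.ne']
        have heq : ∑ j, w j * Real.log (p i / s j i)
            = (1 - α) * Real.log (p i) - ∑ j, w j * Real.log (s j i) := by
          rw [← hw_sum, Finset.sum_mul, ← Finset.sum_sub_distrib]
          refine Finset.sum_congr rfl fun j _ => ?_
          rw [Real.log_div (hp_pos i).ne' (hs_pos j i).ne']; ring
        rw [heq]; linarith
      calc p i * Real.log (p i / (α * p i + ∑ j, w j * s j i))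
          ≤ p i * ∑ j, w j * Real.log (p i / s j i) :=
            mul_le_mul_of_nonneg_left h2 (hp_pos i).le
        _ = ∑ j, w j * (p i * Real.log (p i / s j i)) := by
            rw [Finset.mul_sum]; exact Finset.sum_congr rfl fun j _ => by ring
    calc ∑ i, p i * Real.log (p i / (α * p i + ∑ j, w j * s j i))
        ≤ ∑ i, ∑ j, w j * (p i * Real.log (p i / s j i)) :=
          Finset.sum_le_sum fun i _ => key i
      _ = ∑ j, w j * ∑ i, p i * Real.log (p i / s j i) := by
          rw [Finset.sum_comm]
          exact Finset.sum_congr rfl fun j _ => by rw [Finset.mul_sum]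
  · have hbdd : BddAbove (Set.range fun j => ∑ i, p i * Real.log (p i / s j i)) :=
      Set.Finite.bddAbove (Set.finite_range _)
    have hle : ∀ j, (∑ i, p i * Real.log (p i / s j i)) ≤
        ⨆ j, ∑ i, p i * Real.log (p i / s j i) := fun j => le_ciSup hbdd j
    calc ∑ j, w j * ∑ i, p i * Real.log (p i / s j i)
        ≤ ∑ j, w j * ⨆ j, ∑ i, p i * Real.log (p i / s j i) :=
          Finset.sum_le_sum fun j _ =>
            mul_le_mul_of_nonneg_left (hle j) (hw_nonneg j)
      _ = (1 - α) * ⨆ j, ∑ i, p i * Real.log (p i / s j i) := by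
          rw [← Finset.sum_mul, hw_sum]
end

section
/- Let p be a strictly positive probability distribution on a finite vocabulary V, let α ∈ (0,1], and let (s_g) be a sequence of strictly positive distributions on V satisfying the anchored recursion s_{g+1} = α·p + (1-α)·s_g (componentwise) for all g. Then KL(p‖s_g) ≤ (1-α)^g · KL(p‖s_0) for every g ≥ 0; in particular KL(p‖s_g) → 0 geometrically as g → ∞. -/
open Filter

/-- **Geometric convergence of the anchored recursion in KL divergence.**
If `s (g+1) = α·p + (1-α)·s g` with anchor weight `α ∈ (0,1]`, then
`KL(p‖s g) ≤ (1-α)^g · KL(p‖s 0)` for all `g`, and in particular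
`KL(p‖s g) → 0` as `g → ∞`. -/
theorem anchored_recursion_kl_geometric
    {V : Type*} [Fintype V] [Nonempty V]
    (p : V → ℝ) (hp_pos : ∀ i, 0 < p i) (hp_sum : ∑ i, p i = 1)
    (α : ℝ) (hα0 : 0 < α) (hα1 : α ≤ 1)
    (s : ℕ → V → ℝ)
    (hs_pos : ∀ g i, 0 < s g i) (hs_sum : ∀ g, ∑ i, s g i = 1)
    (hrec : ∀ g i, s (g + 1) i = α * p i + (1 - α) * s g i) :
    (∀ g, ∑ i, p i * Real.log (p i / s g i) ≤
        (1 - α) ^ g * ∑ i, p i * Real.log (p i / s 0 i)) ∧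
      Tendsto (fun g => ∑ i, p i * Real.log (p i / s g i)) atTop (nhds 0) := by
  set KL : ℕ → ℝ := fun g => ∑ i, p i * Real.log (p i / s g i) with hKL
  have hβ0 : (0:ℝ) ≤ 1 - α := by linarith
  have hβ1 : 1 - α < 1 := by linarith
  -- nonnegativity of KL
  have hnonneg : ∀ g, 0 ≤ KL g := by
    intro g
    have h : ∀ i, p i - s g i ≤ p i * Real.log (p i / s g i) := by
      intro i
      have hpi := hp_pos i
      have hsi := hs_pos g i
      have hlog : Real.log (s g i / p i) ≤ s g i / p i - 1 :=
        Real.log_le_sub_one_of_pos (by positivity)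
      have hinv : Real.log (p i / s g i) = - Real.log (s g i / p i) := by
        rw [← Real.log_inv]; congr 1; field_simp
      rw [hinv]
      have : p i * (s g i / p i - 1) = s g i - p i := by field_simp
      nlinarith [mul_le_mul_of_nonneg_left hlog hpi.le]
    calc (0:ℝ) = ∑ i, (p i - s g i) := by
            rw [Finset.sum_sub_distrib, hp_sum, hs_sum]; ring
      _ ≤ KL g := Finset.sum_le_sum fun i _ => h i
  -- contraction step
  have hstep : ∀ g, KL (g + 1) ≤ (1 - α) * KL g := by
    intro g
    simp only [hKL]
    rw [Finset.mul_sum]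
    refine Finset.sum_le_sum fun i _ => ?_
    have hpi := hp_pos i
    have hsi := hs_pos g i
    have hconc : α * Real.log (p i) + (1 - α) * Real.log (s g i)
        ≤ Real.log (s (g + 1) i) := by
      rw [hrec g i]
      have := strictConcaveOn_log_Ioi.concaveOn.2 (Set.mem_Ioi.2 hpi)
        (Set.mem_Ioi.2 hsi) hα0.le hβ0 (by ring)
      simpa [smul_eq_mul] using this
    have hlog1 : Real.log (p i / s (g+1) i) = Real.log (p i) - Real.log (s (g+1) i) :=
      Real.log_div hpi.ne' (hs_pos (g+1) i).ne'
    have hlog0 : Real.log (p i / s g i) = Real.log (p i) - Real.log (s g i) :=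
      Real.log_div hpi.ne' hsi.ne'
    rw [hlog1, hlog0]
    nlinarith [hpi.le]
  -- the geometric bound
  have hbound : ∀ g, KL g ≤ (1 - α) ^ g * KL 0 := by
    intro g
    induction g with
    | zero => simp
    | succ n ih =>
        calc KL (n + 1) ≤ (1 - α) * KL n := hstep n
          _ ≤ (1 - α) * ((1 - α) ^ n * KL 0) := by
              exact mul_le_mul_of_nonneg_left ih hβ0
          _ = (1 - α) ^ (n + 1) * KL 0 := by ring
  refine ⟨hbound, ?_⟩
  have hgeo : Tendsto (fun g => (1 - α) ^ g * KL 0) atTop (nhds 0) := by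
    have := tendsto_pow_atTop_nhds_zero_of_lt_one hβ0 hβ1
    simpa using this.mul_const (KL 0)
  exact tendsto_of_tendsto_of_tendsto_of_le_of_le tendsto_const_nhds hgeo
    hnonneg hbound
end

section
/- Let p and s be strictly positive probability distributions on a finite vocabulary V and let 0 ≤ α₁ ≤ α₂ ≤ 1. Then KL(p‖α₂·p + (1-α₂)·s) ≤ KL(p‖α₁·p + (1-α₁)·s). That is, the KL distance from the base teacher to the anchored mixture is monotone nonincreasing in the anchor weight α. -/
/-- **Monotonicity of KL in the anchor weight.**
For strictly positive distributions `p`, `s` and `0 ≤ α₁ ≤ α₂ ≤ 1`, the KL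
distance from `p` to the anchored mixture is nonincreasing in the anchor
weight: `KL(p‖α₂·p + (1-α₂)·s) ≤ KL(p‖α₁·p + (1-α₁)·s)`. -/
theorem kl_mixture_antitone_in_anchor
    {V : Type*} [Fintype V] [Nonempty V]
    (p s : V → ℝ)
    (hp_pos : ∀ i, 0 < p i) (hp_sum : ∑ i, p i = 1)
    (hs_pos : ∀ i, 0 < s i) (hs_sum : ∑ i, s i = 1)
    (α₁ α₂ : ℝ) (h1 : 0 ≤ α₁) (h12 : α₁ ≤ α₂) (h2 : α₂ ≤ 1) :
    ∑ i, p i * Real.log (p i / (α₂ * p i + (1 - α₂) * s i)) ≤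
      ∑ i, p i * Real.log (p i / (α₁ * p i + (1 - α₁) * s i)) := by
  rcases eq_or_lt_of_le (le_trans h1 h12) with hα₂ | hα₂
  · have h10 : α₁ = 0 := le_antisymm (hα₂ ▸ h12) h1
    simp [h10, ← hα₂]
  · set q₁ : V → ℝ := fun i => α₁ * p i + (1 - α₁) * s i with hq₁
    set q₂ : V → ℝ := fun i => α₂ * p i + (1 - α₂) * s i with hq₂
    have hq₁pos : ∀ i, 0 < q₁ i := fun i => by
      have := hp_pos i; have := hs_pos i
      have h1' : α₁ ≤ 1 := le_trans h12 h2
      rcases eq_or_lt_of_le h1 with h | h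
      · simp only [hq₁, ← h]; nlinarith
      · simp only [hq₁]; nlinarith
    have hq₂pos : ∀ i, 0 < q₂ i := fun i => by
      have := hp_pos i; have := hs_pos i
      simp only [hq₂]; nlinarith
    -- pointwise: p i * s i / q₂ i ≤ α₂ * s i + (1 - α₂) * p i
    have hps : ∀ i, p i * (s i / q₂ i) ≤ α₂ * s i + (1 - α₂) * p i := fun i => by
      rw [mul_div_assoc', div_le_iff₀ (hq₂pos i)]
      have := hp_pos i; have := hs_pos i
      simp only [hq₂]
      nlinarith [mul_nonneg (mul_nonneg hα₂.le (sub_nonneg.mpr h2)) (sq_nonneg (p i - s i))]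
    have hsum_ps : ∑ i, p i * (s i / q₂ i) ≤ 1 := by
      calc ∑ i, p i * (s i / q₂ i) ≤ ∑ i, (α₂ * s i + (1 - α₂) * p i) :=
            Finset.sum_le_sum fun i _ => hps i
        _ = 1 := by rw [Finset.sum_add_distrib, ← Finset.mul_sum, ← Finset.mul_sum,
            hp_sum, hs_sum]; ring
    set lam : ℝ := α₁ / α₂ with hlam
    have hlam0 : 0 ≤ lam := div_nonneg h1 (le_of_lt hα₂)
    have hlam1 : lam ≤ 1 := (div_le_one hα₂).mpr h12
    have hdecomp : ∀ i, q₁ i = lam * q₂ i + (1 - lam) * s i := fun i => by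
      simp only [hq₁, hq₂, hlam]
      field_simp
      ring
    clear_value lam
    have hkey : ∑ i, p i * (q₁ i / q₂ i) ≤ 1 := by
      have : ∀ i, p i * (q₁ i / q₂ i) = lam * p i + (1 - lam) * (p i * (s i / q₂ i)) := by
        intro i
        rw [hdecomp i, add_div, mul_div_assoc, mul_div_assoc,
          div_self (hq₂pos i).ne', mul_one, mul_add]
        ring
      rw [Finset.sum_congr rfl fun i _ => this i, Finset.sum_add_distrib,
        ← Finset.mul_sum, ← Finset.mul_sum, hp_sum]
      nlinarith [Finset.sum_le_sum fun i (_ : i ∈ Finset.univ) => mul_le_mul_of_nonneg_left (hps i) (le_of_lt (hp_pos i))]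
    -- main estimate
    have hterm : ∀ i, p i * Real.log (p i / q₂ i) - p i * Real.log (p i / q₁ i)
        ≤ p i * (q₁ i / q₂ i) - p i := fun i => by
      have hx : 0 < q₁ i / q₂ i := div_pos (hq₁pos i) (hq₂pos i)
      have hlog : Real.log (p i / q₂ i) - Real.log (p i / q₁ i) = Real.log (q₁ i / q₂ i) := by
        rw [Real.log_div (ne_of_gt (hp_pos i)) (ne_of_gt (hq₂pos i)),
          Real.log_div (ne_of_gt (hp_pos i)) (ne_of_gt (hq₁pos i)),
          Real.log_div (ne_of_gt (hq₁pos i)) (ne_of_gt (hq₂pos i))]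
        ring
      have := Real.log_le_sub_one_of_pos hx
      calc p i * Real.log (p i / q₂ i) - p i * Real.log (p i / q₁ i)
          = p i * Real.log (q₁ i / q₂ i) := by rw [← mul_sub, hlog]
        _ ≤ p i * (q₁ i / q₂ i - 1) :=
            mul_le_mul_of_nonneg_left this (le_of_lt (hp_pos i))
        _ = p i * (q₁ i / q₂ i) - p i := by ring
    have hsum := Finset.sum_le_sum fun i (_ : i ∈ Finset.univ) => hterm i
    rw [Finset.sum_sub_distrib, Finset.sum_sub_distrib, hp_sum] at hsum
    have : ∑ i, p i * (q₁ i / q₂ i) - 1 ≤ 0 := by linarith [hkey]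
    simp only [hq₁, hq₂] at hsum hkey
    linarith
end

section
/- Let p and s be strictly positive probability distributions on a finite vocabulary V with p ≠ s, and let 0 ≤ α₁ < α₂ ≤ 1. Then KL(p‖α₂·p + (1-α₂)·s) < KL(p‖α₁·p + (1-α₁)·s). That is, when the student differs from the base teacher, strictly increasing the anchor weight strictly decreases the KL distance of the meta-teacher from the base teacher. -/
open Real Finset

/-- Strict Gibbs inequality. -/
lemma gibbs_strict_aux {V : Type*} [Fintype V]
    (p q : V → ℝ) (hp : ∀ i, 0 < p i) (hq : ∀ i, 0 < q i)
    (hps : ∑ i, p i = 1) (hqs : ∑ i, q i = 1)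
    (hne : ∃ i, p i ≠ q i) :
    ∑ i, p i * Real.log (q i) < ∑ i, p i * Real.log (p i) := by
  have h1 : ∑ i, p i * (Real.log (q i) - Real.log (p i)) <
      ∑ i, p i * (q i / p i - 1) := by
    obtain ⟨j, hj⟩ := hne
    apply Finset.sum_lt_sum
    · intro i _
      have hd : (0:ℝ) < q i / p i := div_pos (hq i) (hp i)
      have := Real.log_le_sub_one_of_pos hd
      rw [Real.log_div (hq i).ne' (hp i).ne'] at this
      nlinarith [hp i]
    · refine ⟨j, Finset.mem_univ j, ?_⟩
      have hd : (0:ℝ) < q j / p j := div_pos (hq j) (hp j)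
      have hx : q j / p j ≠ 1 := by
        intro h
        apply hj
        rw [div_eq_one_iff_eq (hp j).ne'] at h
        exact h.symm
      have := Real.log_lt_sub_one_of_pos hd hx
      rw [Real.log_div (hq j).ne' (hp j).ne'] at this
      nlinarith [hp j]
  have h2 : ∑ i, p i * (q i / p i - 1) = 0 := by
    have he : ∀ i ∈ Finset.univ, p i * (q i / p i - 1) = q i - p i := by
      intro i _
      rw [mul_comm, sub_mul, one_mul, div_mul_cancel₀ _ (hp i).ne']
    rw [Finset.sum_congr rfl he, Finset.sum_sub_distrib, hps, hqs]
    ring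
  have h3 : ∑ i, p i * (Real.log (q i) - Real.log (p i)) =
      ∑ i, p i * Real.log (q i) - ∑ i, p i * Real.log (p i) := by
    simp [mul_sub, Finset.sum_sub_distrib]
  rw [h2] at h1
  rw [h3] at h1
  linarith

/-- **Strict monotonicity of KL in the anchor weight when `p ≠ s`.**
For strictly positive distributions `p ≠ s` and `0 ≤ α₁ < α₂ ≤ 1`, strictly
increasing the anchor weight strictly decreases the KL distance of the
meta-teacher from the base teacher:
`KL(p‖α₂·p + (1-α₂)·s) < KL(p‖α₁·p + (1-α₁)·s)`. -/
theorem kl_mixture_strict_anti_in_anchor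
    {V : Type*} [Fintype V] [Nonempty V]
    (p s : V → ℝ)
    (hp_pos : ∀ i, 0 < p i) (hp_sum : ∑ i, p i = 1)
    (hs_pos : ∀ i, 0 < s i) (hs_sum : ∑ i, s i = 1)
    (hne : p ≠ s)
    (α₁ α₂ : ℝ) (h1 : 0 ≤ α₁) (h12 : α₁ < α₂) (h2 : α₂ ≤ 1) :
    ∑ i, p i * Real.log (p i / (α₂ * p i + (1 - α₂) * s i)) <
      ∑ i, p i * Real.log (p i / (α₁ * p i + (1 - α₁) * s i)) := by
  have hα1lt : α₁ < 1 := lt_of_lt_of_le h12 h2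
  set q₁ : V → ℝ := fun i => α₁ * p i + (1 - α₁) * s i with hq₁
  set q₂ : V → ℝ := fun i => α₂ * p i + (1 - α₂) * s i with hq₂
  have hq₁pos : ∀ i, 0 < q₁ i := fun i => by
    have := hp_pos i; have := hs_pos i
    have : (0:ℝ) < 1 - α₁ := by linarith
    simp only [hq₁]
    nlinarith [hp_pos i, hs_pos i]
  have hq₂pos : ∀ i, 0 < q₂ i := fun i => by
    have h0 : 0 < α₂ := lt_of_le_of_lt h1 h12
    simp only [hq₂]
    nlinarith [mul_pos h0 (hp_pos i),
      mul_nonneg (by linarith : (0:ℝ) ≤ 1 - α₂) (hs_pos i).le]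
  have hq₁sum : ∑ i, q₁ i = 1 := by
    simp only [hq₁]
    rw [Finset.sum_add_distrib, ← Finset.mul_sum, ← Finset.mul_sum, hp_sum, hs_sum]
    ring
  -- there is an index where p and s differ
  obtain ⟨j, hj⟩ : ∃ j, p j ≠ s j := by
    by_contra h
    push_neg at h
    exact hne (funext h)
  have hpq₁ : ∃ i, p i ≠ q₁ i := by
    refine ⟨j, ?_⟩
    simp only [hq₁]
    intro h
    apply hj
    have : (1 - α₁) * (s j - p j) = 0 := by linarith
    rcases mul_eq_zero.1 this with h' | h'
    · exfalso; linarith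
    · linarith
  -- mixture coefficient
  set t : ℝ := (α₂ - α₁) / (1 - α₁) with ht
  have ht0 : 0 < t := div_pos (by linarith) (by linarith)
  have ht1 : t ≤ 1 := by
    rw [ht, div_le_one (by linarith)]
    linarith
  have hmix : ∀ i, q₂ i = t * p i + (1 - t) * q₁ i := by
    intro i
    have hd : (1:ℝ) - α₁ ≠ 0 := by linarith
    simp only [hq₂, hq₁, ht]
    field_simp
    ring
  -- pointwise concavity of log
  have hconc : ∀ i, t * Real.log (p i) + (1 - t) * Real.log (q₁ i) ≤
      Real.log (q₂ i) := by
    intro i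
    have := strictConcaveOn_log_Ioi.concaveOn.2 (Set.mem_Ioi.2 (hp_pos i))
      (Set.mem_Ioi.2 (hq₁pos i)) (le_of_lt ht0) (by linarith : (0:ℝ) ≤ 1 - t)
      (by ring)
    simpa [hmix i, smul_eq_mul] using this
  -- strict Gibbs
  have hg : ∑ i, p i * Real.log (q₁ i) < ∑ i, p i * Real.log (p i) :=
    gibbs_strict_aux p q₁ hp_pos hq₁pos hp_sum hq₁sum hpq₁
  -- combine
  have key : ∑ i, p i * Real.log (q₁ i) < ∑ i, p i * Real.log (q₂ i) := by
    have hstep : ∑ i, p i * (t * Real.log (p i) + (1 - t) * Real.log (q₁ i)) ≤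
        ∑ i, p i * Real.log (q₂ i) :=
      Finset.sum_le_sum fun i _ =>
        mul_le_mul_of_nonneg_left (hconc i) (hp_pos i).le
    have hsplit : ∑ i, p i * (t * Real.log (p i) + (1 - t) * Real.log (q₁ i)) =
        t * ∑ i, p i * Real.log (p i) + (1 - t) * ∑ i, p i * Real.log (q₁ i) := by
      rw [Finset.mul_sum, Finset.mul_sum, ← Finset.sum_add_distrib]
      apply Finset.sum_congr rfl
      intro i _
      ring
    rw [hsplit] at hstep
    nlinarith
  have hL : ∀ (q : V → ℝ), (∀ i, 0 < q i) →
      ∑ i, p i * Real.log (p i / q i) =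
        ∑ i, p i * Real.log (p i) - ∑ i, p i * Real.log (q i) := by
    intro q hq
    rw [← Finset.sum_sub_distrib]
    apply Finset.sum_congr rfl
    intro i _
    rw [Real.log_div (hp_pos i).ne' (hq i).ne']
    ring
  calc ∑ i, p i * Real.log (p i / (α₂ * p i + (1 - α₂) * s i))
      = ∑ i, p i * Real.log (p i) - ∑ i, p i * Real.log (q₂ i) := hL q₂ hq₂pos
    _ < ∑ i, p i * Real.log (p i) - ∑ i, p i * Real.log (q₁ i) := by linarith
    _ = ∑ i, p i * Real.log (p i / (α₁ * p i + (1 - α₁) * s i)) := (hL q₁ hq₁pos).symm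
end

section
/- Let p be a strictly positive probability distribution on a finite vocabulary V, let α ∈ (0,1], and let (s_g) satisfy the anchored recursion s_{g+1} = α·p + (1-α)·s_g. Then the total variation distance between p and s_g satisfies (∑ i, |p i - s_g i|)² ≤ 2 · (1-α)^g · KL(p‖s_0) for every g ≥ 0; in particular the L¹ distance from the base teacher decays to zero at geometric rate √(1-α). -/
/-!
The anchored recursion gives `p - s g = (1 - α) ^ g • (p - s 0)`, so the L¹ distance contracts by
`(1 - α) ^ g`, and its square by `(1 - α) ^ (2 g) ≤ (1 - α) ^ g`; Pinsker's inequality bounds the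
initial squared distance by `2 KL(p‖s 0)`. Pinsker itself follows from the pointwise bound
`klFun t ≥ 3 (t - 1)² / (2 (t + 2))`, summed with weights `q`, and Cauchy–Schwarz with weights
`p + 2 q`, whose total mass is `3`.
-/

open Real Set Finset InformationTheory

theorem isMinOn_Ioi_of_hasDerivAt {f f' : ℝ → ℝ} {a c : ℝ} (hac : a < c)
    (hf : ∀ x ∈ Ioi a, HasDerivAt f (f' x) x)
    (h_left : ∀ x ∈ Ioo a c, f' x ≤ 0) (h_right : ∀ x ∈ Ioi c, 0 ≤ f' x) :
    IsMinOn f (Ioi a) c := by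
  have hcont : ContinuousOn f (Ioi a) := fun x hx => (hf x hx).continuousAt.continuousWithinAt
  have hderiv (D : Set ℝ) (hD : D ⊆ Ioi a) (x : ℝ) (hx : x ∈ interior D) :
      HasDerivWithinAt f (f' x) (interior D) x :=
    (hf x (hD (interior_subset hx))).hasDerivWithinAt
  intro x hx
  rcases le_total x c with hxc | hcx
  · have hanti : AntitoneOn f (Ioc a c) :=
      antitoneOn_of_hasDerivWithinAt_nonpos (convex_Ioc a c) (hcont.mono Ioc_subset_Ioi_self)
        (hderiv _ Ioc_subset_Ioi_self) (by simpa only [interior_Ioc] using h_left)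
    exact hanti ⟨hx, hxc⟩ ⟨hac, le_rfl⟩ hxc
  · have hmono : MonotoneOn f (Ici c) :=
      monotoneOn_of_hasDerivWithinAt_nonneg (convex_Ici c) (hcont.mono (Ici_subset_Ioi.2 hac))
        (hderiv _ (Ici_subset_Ioi.2 hac)) (by simpa only [interior_Ici] using h_right)
    exact hmono self_mem_Ici hcx hcx

theorem quadratic_div_le_log {t : ℝ} (ht : 0 < t) :
    (5 * t ^ 2 - 4 * t - 1) / (2 * t ^ 2 + 4 * t) ≤ log t := by
  let f : ℝ → ℝ := fun t => log t - (5 * t ^ 2 - 4 * t - 1) / (2 * t ^ 2 + 4 * t)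
  have hf : ∀ x ∈ Ioi (0 : ℝ), HasDerivAt f ((x - 1) ^ 3 / (x ^ 2 * (x + 2) ^ 2)) x := by
    intro x (hx : 0 < x)
    have hnum : HasDerivAt (fun t => 5 * t ^ 2 - 4 * t - 1) (10 * x - 4) x :=
      ((((hasDerivAt_pow 2 x).const_mul 5).sub ((hasDerivAt_id x).const_mul 4)).sub_const
        1).congr_deriv (by ring)
    have hden : HasDerivAt (fun t => 2 * t ^ 2 + 4 * t) (4 * x + 4) x :=
      (((hasDerivAt_pow 2 x).const_mul 2).add ((hasDerivAt_id x).const_mul 4)).congr_deriv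
        (by ring)
    refine ((hasDerivAt_log hx.ne').sub (hnum.div hden (by positivity))).congr_deriv ?_
    field_simp
    ring
  have hmin := isMinOn_Ioi_of_hasDerivAt one_pos hf
    (fun x hx => div_nonpos_of_nonpos_of_nonneg
      ((Odd.pow_nonpos_iff (by decide)).2 (by linarith [hx.2])) (by positivity))
    (fun x hx => div_nonneg (pow_nonneg (by linarith [mem_Ioi.1 hx]) _) (by positivity)) ht
  have hf1 : f 1 = 0 := by norm_num [f]
  simpa [f, hf1, sub_nonneg] using hmin

theorem sq_sub_one_div_le_klFun {t : ℝ} (ht : 0 < t) :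
    3 * (t - 1) ^ 2 / (2 * (t + 2)) ≤ klFun t := by
  have key : t * ((5 * t ^ 2 - 4 * t - 1) / (2 * t ^ 2 + 4 * t)) + 1 - t
      = 3 * (t - 1) ^ 2 / (2 * (t + 2)) := by
    field_simp
    ring
  rw [klFun_apply, ← key]
  gcongr
  exact quadratic_div_le_log ht

theorem sq_sub_div_le_mul_log_div_sub_add {a b : ℝ} (ha : 0 < a) (hb : 0 < b) :
    3 * (a - b) ^ 2 / (2 * (a + 2 * b)) ≤ a * log (a / b) - a + b := by
  have key : b * (3 * (a / b - 1) ^ 2 / (2 * (a / b + 2)))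
      = 3 * (a - b) ^ 2 / (2 * (a + 2 * b)) := by
    field_simp
  have hkl : b * klFun (a / b) = a * log (a / b) - a + b := by
    rw [klFun_apply]
    field_simp
    ring
  rw [← key, ← hkl]
  exact mul_le_mul_of_nonneg_left (sq_sub_one_div_le_klFun (div_pos ha hb)) hb.le

theorem sq_sum_abs_sub_le_two_mul_sum_mul_log_div {ι : Type*} [Fintype ι] {p q : ι → ℝ}
    (hp : ∀ i, 0 < p i) (hq : ∀ i, 0 < q i) (hp_sum : ∑ i, p i = 1) (hq_sum : ∑ i, q i = 1) :
    (∑ i, |p i - q i|) ^ 2 ≤ 2 * ∑ i, p i * log (p i / q i) := by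
  have hw : ∑ i, (p i + 2 * q i) = 3 := by
    rw [sum_add_distrib, ← mul_sum, hp_sum, hq_sum]
    norm_num
  have hcs := sq_sum_div_le_sum_sq_div univ (fun i => |p i - q i|)
    (g := fun i => p i + 2 * q i) fun i _ => by linarith [hp i, hq i]
  simp only [sq_abs, hw] at hcs
  have hkl : ∑ i, (p i * log (p i / q i) - p i + q i) = ∑ i, p i * log (p i / q i) := by
    rw [sum_add_distrib, sum_sub_distrib, hp_sum, hq_sum]
    ring
  calc (∑ i, |p i - q i|) ^ 2 ≤ 3 * ∑ i, (p i - q i) ^ 2 / (p i + 2 * q i) := by linarith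
    _ = 2 * ∑ i, 3 * (p i - q i) ^ 2 / (2 * (p i + 2 * q i)) := by
        rw [mul_sum, mul_sum]
        refine sum_congr rfl fun i _ => ?_
        field_simp
    _ ≤ 2 * ∑ i, (p i * log (p i / q i) - p i + q i) := by
        gcongr with i
        exact sq_sub_div_le_mul_log_div_sub_add (hp i) (hq i)
    _ = 2 * ∑ i, p i * log (p i / q i) := by rw [hkl]

theorem sub_eq_pow_mul_sub_of_anchored {R : Type*} [CommRing R] {a α : R} {x : ℕ → R}
    (h : ∀ n, x (n + 1) = α * a + (1 - α) * x n) (n : ℕ) :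
    a - x n = (1 - α) ^ n * (a - x 0) := by
  induction n with
  | zero => simp
  | succ n ih => rw [h, pow_succ', mul_assoc, ← ih]; ring

theorem anchored_recursion_tv_geometric_general
    {V : Type*} [Fintype V]
    (p : V → ℝ) (hp_pos : ∀ i, 0 < p i) (hp_sum : ∑ i, p i = 1)
    (α : ℝ) (hα0 : 0 < α) (hα1 : α ≤ 1)
    (s : ℕ → V → ℝ)
    (hs_pos : ∀ g i, 0 < s g i) (hs_sum : ∀ g, ∑ i, s g i = 1)
    (hrec : ∀ g i, s (g + 1) i = α * p i + (1 - α) * s g i) :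
    ∀ g, (∑ i, |p i - s g i|) ^ 2 ≤
      2 * ((1 - α) ^ g * ∑ i, p i * Real.log (p i / s 0 i)) := by
  intro g
  have hβ : 0 ≤ (1 - α) ^ g := pow_nonneg (by linarith) g
  have hdist : ∑ i, |p i - s g i| = (1 - α) ^ g * ∑ i, |p i - s 0 i| := by
    rw [mul_sum]
    refine sum_congr rfl fun i _ => ?_
    rw [sub_eq_pow_mul_sub_of_anchored (x := fun n => s n i) (fun n => hrec n i), abs_mul,
      abs_of_nonneg hβ]
  have hpinsker := sq_sum_abs_sub_le_two_mul_sum_mul_log_div hp_pos (hs_pos 0) hp_sum (hs_sum 0)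
  calc (∑ i, |p i - s g i|) ^ 2 = (1 - α) ^ g * ((1 - α) ^ g * (∑ i, |p i - s 0 i|) ^ 2) := by
        rw [hdist]; ring
    _ ≤ (1 - α) ^ g * (1 * (2 * ∑ i, p i * Real.log (p i / s 0 i))) := by
        gcongr
        exact pow_le_one₀ (by linarith) (by linarith)
    _ = 2 * ((1 - α) ^ g * ∑ i, p i * Real.log (p i / s 0 i)) := by ring

/-- **Geometric decay of total variation distance via Pinsker.**
If `s (g+1) = α·p + (1-α)·s g` with `α ∈ (0,1]`, then
`(∑ i, |p i - s g i|)² ≤ 2 · (1-α)^g · KL(p‖s 0)` for every `g`. -/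
theorem anchored_recursion_tv_geometric
    {V : Type*} [Fintype V] [Nonempty V]
    (p : V → ℝ) (hp_pos : ∀ i, 0 < p i) (hp_sum : ∑ i, p i = 1)
    (α : ℝ) (hα0 : 0 < α) (hα1 : α ≤ 1)
    (s : ℕ → V → ℝ)
    (hs_pos : ∀ g i, 0 < s g i) (hs_sum : ∀ g, ∑ i, s g i = 1)
    (hrec : ∀ g i, s (g + 1) i = α * p i + (1 - α) * s g i) :
    ∀ g, (∑ i, |p i - s g i|) ^ 2 ≤
      2 * ((1 - α) ^ g * ∑ i, p i * Real.log (p i / s 0 i)) :=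
  anchored_recursion_tv_geometric_general p hp_pos hp_sum α hα0 hα1 s hs_pos hs_sum hrec
end

section
/- Let p be a strictly positive probability distribution on a finite vocabulary V, let α ∈ (0,1], and let (s_g) satisfy the anchored recursion s_{g+1} = α·p + (1-α)·s_g with any strictly positive initialization s_0 (so that KL(p‖s_0) < ∞). Then KL(p‖s_g) → 0 as g → ∞. Thus the basin of attraction of the fixed point p includes all initializations with finite KL distance from the base teacher, and the fixed point is globally attractive. -/
open Filter

/-- **Global attractiveness of the base teacher fixed point.**
For any strictly positive initialization `s 0` (so `KL(p‖s 0) < ∞`), the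
anchored recursion `s (g+1) = α·p + (1-α)·s g` with `α ∈ (0,1]` satisfies
`KL(p‖s g) → 0` as `g → ∞`. -/
theorem anchored_recursion_globally_attractive
    {V : Type*} [Fintype V] [Nonempty V]
    (p : V → ℝ) (hp_pos : ∀ i, 0 < p i) (hp_sum : ∑ i, p i = 1)
    (α : ℝ) (hα0 : 0 < α) (hα1 : α ≤ 1)
    (s : ℕ → V → ℝ)
    (hs_pos : ∀ g i, 0 < s g i) (hs_sum : ∀ g, ∑ i, s g i = 1)
    (hrec : ∀ g i, s (g + 1) i = α * p i + (1 - α) * s g i) :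
    Tendsto (fun g => ∑ i, p i * Real.log (p i / s g i)) atTop (nhds 0) := by
  have hform : ∀ g i, s g i = p i + (1 - α) ^ g * (s 0 i - p i) := by
    intro g
    induction g with
    | zero => intro i; simp
    | succ n ih => intro i; rw [hrec, ih]; ring
  have hlim : ∀ i, Tendsto (fun g => s g i) atTop (nhds (p i)) := by
    intro i
    have h : Tendsto (fun g : ℕ => (1 - α) ^ g) atTop (nhds 0) :=
      tendsto_pow_atTop_nhds_zero_of_lt_one (by linarith) (by linarith)
    have h2 : Tendsto (fun g => p i + (1 - α) ^ g * (s 0 i - p i)) atTop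
        (nhds (p i + 0 * (s 0 i - p i))) :=
      tendsto_const_nhds.add (h.mul_const _)
    simp only [zero_mul, add_zero] at h2
    exact h2.congr fun g => (hform g i).symm
  have hterm : ∀ i, Tendsto (fun g => p i * Real.log (p i / s g i)) atTop (nhds 0) := by
    intro i
    have h : Tendsto (fun g => p i * Real.log (p i / s g i)) atTop
        (nhds (p i * Real.log (p i / p i))) := by
      refine tendsto_const_nhds.mul (Tendsto.log ?_ ?_)
      · exact tendsto_const_nhds.div (hlim i) (ne_of_gt (hp_pos i))
      · exact div_ne_zero (ne_of_gt (hp_pos i)) (ne_of_gt (hp_pos i))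
    simpa [div_self (ne_of_gt (hp_pos i))] using h
  have h := tendsto_finset_sum Finset.univ (fun i _ => hterm i)
  simpa using h
end
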